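/- arXiv:1511.07789 — 5 statements merged into one kernel-verified Lean document; each statement's English description precedes it below -/
import Mathlib

section
/- Let k be a field and R = k[x_1,x_2]. If L_1,…,L_r ∈ R_1 (r ≥ 2) are linear forms that are pairwise linearly independent (no two proportional), then the ideal J = (L_2L_3⋯L_r, L_1L_3⋯L_r, …, L_1L_2⋯L_{r−1}), generated by the r products of all but one of the L_i, equals (x_1,x_2)^{r−1}, the (r−1)-st power of the irrelevant maximal ideal. -/
/-!
Each product `∏_{j ≠ i} L_j` is a form of degree `r - 1`. Writing `L_i = a x₁ + b x₂`, evaluation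
at the point `(-b, a)` kills `L_i` but, by pairwise independence, no other `L_j`; hence it kills
every product except the `i`-th, so the `r` products are linearly independent over `k`. Forms of
degree `r - 1` in two variables make up a space of dimension `r`, so the products span it, and
the ideal generated by all forms of degree `r - 1` is `(x₁, x₂)^(r-1)`.
-/

open MvPolynomial Finset

namespace MvPolynomial

theorem finrank_homogeneousSubmodule {σ R : Type*} [Fintype σ] [CommRing R]
    [StrongRankCondition R] (n : ℕ) :
    Module.finrank R (homogeneousSubmodule σ R n) = (Fintype.card σ + n - 1).choose n := by
  classical
  have hdeg : {d : σ →₀ ℕ | d.degree = n} = ((univ : Finset σ).finsuppAntidiag n : Set _) := by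
    ext d
    simp [mem_finsuppAntidiag, Finsupp.degree_eq_sum]
  rw [homogeneousSubmodule_eq_finsupp_supported,
    (AddMonoidAlgebra.supportedEquivFinsupp _).finrank_eq, hdeg, Module.finrank_finsupp_self]
  simp only [Finset.coe_sort_coe, Fintype.card_coe, card_finsuppAntidiag_nat_eq_choose, card_univ]

theorem span_homogeneousSubmodule_eq_pow_idealOfVars {σ R : Type*} [CommSemiring R] (n : ℕ) :
    Ideal.span (homogeneousSubmodule σ R n : Set (MvPolynomial σ R)) = idealOfVars σ R ^ n := by
  rw [← homogeneousSubmodule_one_pow, homogeneousSubmodule_one_eq_span_X, Submodule.span_pow,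
    Ideal.span, Submodule.span_span_of_tower, idealOfVars, Ideal.span, Submodule.span_pow]

theorem isHomogeneous_prod_erase {σ R ι : Type*} [CommSemiring R] [Fintype ι] [DecidableEq ι]
    {L : ι → MvPolynomial σ R} (hL : ∀ i, (L i).IsHomogeneous 1) (i : ι) :
    (∏ j ∈ univ.erase i, L j).IsHomogeneous (Fintype.card ι - 1) := by
  simpa [card_erase_of_mem (mem_univ i)] using
    IsHomogeneous.prod (univ.erase i) L (fun _ => 1) fun j _ => hL j

theorem aeval_sum_smul_X_eq_det {k : Type*} [Field k] (a b : Fin 2 → k) :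
    aeval ![-(a 1), a 0] (∑ i, b i • (X i : MvPolynomial (Fin 2) k)) = a 0 * b 1 - a 1 * b 0 := by
  simp only [Fin.sum_univ_two, map_add, map_smul, aeval_X, Matrix.cons_val_zero,
    Matrix.cons_val_one, smul_eq_mul]
  ring

theorem det_ne_zero_of_linearIndependent_sum_smul_X {k : Type*} [Field k] {a b : Fin 2 → k}
    (h : LinearIndependent k ![∑ i, a i • (X i : MvPolynomial (Fin 2) k), ∑ i, b i • X i]) :
    a 0 * b 1 - a 1 * b 0 ≠ 0 := by
  have hrows : LinearIndependent k (Matrix.of ![a, b]).row := by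
    refine LinearIndependent.of_comp
      (Fintype.linearCombination k (X : Fin 2 → MvPolynomial (Fin 2) k)) ?_
    convert h using 1
    ext i : 1
    fin_cases i <;> simp [Fintype.linearCombination_apply]
  have := (Matrix.isUnit_iff_isUnit_det _).mp (Matrix.linearIndependent_rows_iff_isUnit.mp hrows)
  simpa [Matrix.det_fin_two] using this.ne_zero

end MvPolynomial

theorem linearIndependent_prod_erase {k A ι : Type*} [Field k] [CommRing A] [Algebra k A]
    [Fintype ι] [DecidableEq ι] (f : ι → A) (φ : ι → A →ₐ[k] k) (hφ : ∀ i, φ i (f i) = 0)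
    (hφne : ∀ i j, i ≠ j → φ i (f j) ≠ 0) :
    LinearIndependent k fun i => ∏ j ∈ univ.erase i, f j := by
  rw [Fintype.linearIndependent_iff]
  intro g hg i
  have hvanish : ∀ j ≠ i, φ i (∏ l ∈ univ.erase j, f l) = 0 := fun j hji => by
    rw [map_prod]
    exact prod_eq_zero (mem_erase.mpr ⟨hji.symm, mem_univ i⟩) (hφ i)
  have hi : φ i (∏ l ∈ univ.erase i, f l) ≠ 0 := by
    rw [map_prod]
    exact prod_ne_zero_iff.mpr fun j hj => hφne i j (ne_of_mem_erase hj).symm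
  have hgi := congrArg (φ i) hg
  simp only [map_sum, map_smul, map_zero, smul_eq_mul] at hgi
  rw [sum_eq_single i (fun j _ hji => by rw [hvanish j hji, mul_zero]) (by simp)] at hgi
  exact (mul_eq_zero.mp hgi).resolve_right hi

/-- In `k[x₁,x₂]`, for pairwise linearly independent linear forms `L 1, …, L r` (`r ≥ 2`),
the ideal generated by the products of all but one of the `L i` equals the `(r-1)`-st power
of the irrelevant maximal ideal `(x₁, x₂)`. -/
theorem stmt1 {k : Type*} [Field k] {r : ℕ} (hr : 2 ≤ r)
    (L : Fin r → MvPolynomial (Fin 2) k) (hL : ∀ i, (L i).IsHomogeneous 1)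
    (hind : ∀ i j, i ≠ j → LinearIndependent k ![L i, L j]) :
    Ideal.span (Set.range fun i : Fin r => ∏ j ∈ Finset.univ.erase i, L j)
      = (Ideal.span {(X 0 : MvPolynomial (Fin 2) k), X 1}) ^ (r - 1) := by
  classical
  choose c hc using fun i => (Submodule.mem_span_range_iff_exists_fun k).mp
    (homogeneousSubmodule_one_eq_span_X.le (hL i))
  have hindep : LinearIndependent k fun i => ∏ j ∈ univ.erase i, L j :=
    linearIndependent_prod_erase L (fun i => aeval ![-(c i 1), c i 0])
      (fun i => by rw [← hc i, aeval_sum_smul_X_eq_det]; ring)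
      (fun i j hij => by
        rw [← hc j, aeval_sum_smul_X_eq_det]
        exact det_ne_zero_of_linearIndependent_sum_smul_X (by simpa only [hc] using hind i j hij))
  have : FiniteDimensional k (homogeneousSubmodule (Fin 2) k (r - 1)) :=
    Module.Finite.iff_fg.mpr (homogeneousSubmodule_fg _ _ _)
  have hspan : Submodule.span k (Set.range fun i => ∏ j ∈ univ.erase i, L j) =
      homogeneousSubmodule (Fin 2) k (r - 1) := by
    refine Submodule.eq_of_le_of_finrank_eq (Submodule.span_le.mpr (Set.range_subset_iff.mpr
      fun i => by simpa using isHomogeneous_prod_erase hL i)) ?_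
    rw [finrank_span_eq_card hindep, finrank_homogeneousSubmodule, Fintype.card_fin,
      Fintype.card_fin, show 2 + (r - 1) - 1 = r - 1 + 1 by omega, Nat.choose_succ_self_right]
    omega
  have hX : ({X 0, X 1} : Set (MvPolynomial (Fin 2) k)) = Set.range X := by
    ext; simp [Fin.exists_fin_two, eq_comm]
  rw [Ideal.span, ← Submodule.span_span_of_tower k, hspan, ← Ideal.span,
    span_homogeneousSubmodule_eq_pow_idealOfVars, hX]
end

section
/- Let k be an algebraically closed field and R = k[x_1,…,x_n] with n ≥ 3 and r ≥ 2. For a general choice of linear forms L_1,…,L_r ∈ R_1, the intersection of the ideals (L_i, L_j) over all pairs 1 ≤ i < j ≤ r, i.e. ⋂_{1≤i<j≤r}(L_i,L_j), equals the ideal (L_2L_3⋯L_r, L_1L_3⋯L_r, …, L_1L_2⋯L_{r−1}) generated by the r products of all but one of the L_i. -/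
/-!
If three rows of the coefficient matrix have a nonzero minor on the first three columns, a linear
change of variables turns the corresponding forms into three distinct variables. Hence any two of
the forms generate a prime ideal (the kernel of setting two variables to zero) that does not
contain the third. "General" means that all these minors are nonzero.

Under this condition the equality holds for elements of any commutative ring, by induction on the
number of forms. If `f` lies in every `(L i, L j)`, then the primes `(L a, L i)` give
`f = g * L a + q * ∏_{i ≠ a} L i`, and since `(L i, L j)` is prime and does not contain `L a`,
`g` lies in every `(L i, L j)` with `i, j ≠ a`, so the induction hypothesis applies to `g`.
-/

open MvPolynomial Finset

noncomputable def lin {k : Type*} [CommSemiring k] {n : ℕ} (c : Fin n → k) :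
    MvPolynomial (Fin n) k :=
  ∑ i, C (c i) * X i

namespace MvPolynomial

variable {σ R : Type*} [CommRing R]

theorem ker_aeval_ite_eq_span_X_image (s : Set σ) [DecidablePred (· ∈ s)] :
    RingHom.ker (aeval fun i => (if i ∈ s then 0 else X i : MvPolynomial σ R) :
        MvPolynomial σ R →ₐ[R] MvPolynomial σ R) = Ideal.span (X '' s) := by
  set φ : MvPolynomial σ R →ₐ[R] MvPolynomial σ R := aeval fun i => if i ∈ s then 0 else X i
  have hφX (i : σ) : φ (X i) = if i ∈ s then 0 else X i := aeval_X _ _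
  have hsub (f : MvPolynomial σ R) : f - φ f ∈ Ideal.span (X '' s) := by
    induction f using MvPolynomial.induction_on with
    | C a => simp [φ]
    | add p q hp hq => simpa only [map_add, add_sub_add_comm] using add_mem hp hq
    | mul_X p i hp =>
      rw [map_mul, hφX]
      split_ifs with hi
      · simpa using Ideal.mul_mem_left _ p (Ideal.subset_span (Set.mem_image_of_mem X hi))
      · simpa only [← sub_mul] using Ideal.mul_mem_right _ _ hp
  refine le_antisymm (fun f hf => by simpa [RingHom.mem_ker.mp hf] using hsub f) ?_
  rw [Ideal.span_le]
  rintro _ ⟨i, hi, rfl⟩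
  simp [hφX, hi]

theorem isPrime_span_X_image [IsDomain R] (s : Set σ) :
    (Ideal.span (X '' s : Set (MvPolynomial σ R))).IsPrime := by
  classical
  rw [← ker_aeval_ite_eq_span_X_image]
  exact RingHom.ker_isPrime _

theorem X_notMem_span_X_image [Nontrivial R] {s : Set σ} {i : σ} (hi : i ∉ s) :
    (X i : MvPolynomial σ R) ∉ Ideal.span (X '' s) := by
  classical
  simpa [mem_ideal_span_X_image, support_X, Finsupp.single_apply] using hi

end MvPolynomial

section LinearSubstitution

open scoped Matrix

variable {k : Type*} [CommRing k] {n : ℕ}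

theorem lin_eq_sum_smul (c : Fin n → k) : lin c = ∑ i, c i • X i := by
  simp only [lin, C_mul']

theorem lin_one_apply (i : Fin n) : lin ((1 : Matrix (Fin n) (Fin n) k) i) = X i := by
  simp [lin_eq_sum_smul, Matrix.one_apply]

noncomputable def linearSubst (A : Matrix (Fin n) (Fin n) k) :
    MvPolynomial (Fin n) k →ₐ[k] MvPolynomial (Fin n) k :=
  aeval fun i => lin (A i)

theorem linearSubst_X (A : Matrix (Fin n) (Fin n) k) (i : Fin n) :
    linearSubst A (X i) = lin (A i) :=
  aeval_X _ _

theorem linearSubst_lin (A : Matrix (Fin n) (Fin n) k) (c : Fin n → k) :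
    linearSubst A (lin c) = lin (c ᵥ* A) := by
  simp only [lin_eq_sum_smul, map_sum, map_smul, linearSubst_X, smul_sum, Matrix.vecMul,
    dotProduct, sum_smul, mul_smul]
  exact sum_comm

theorem linearSubst_comp (A B : Matrix (Fin n) (Fin n) k) :
    (linearSubst A).comp (linearSubst B) = linearSubst (B * A) :=
  algHom_ext fun i => by
    rw [AlgHom.comp_apply, linearSubst_X, linearSubst_X, linearSubst_lin,
      Matrix.mul_apply_eq_vecMul]

theorem linearSubst_one : linearSubst (1 : Matrix (Fin n) (Fin n) k) = AlgHom.id k _ :=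
  algHom_ext fun i => by
    rw [linearSubst_X, AlgHom.id_apply, lin_one_apply]

noncomputable def linearSubstEquiv (A : Matrix (Fin n) (Fin n) k) (hA : IsUnit A.det) :
    MvPolynomial (Fin n) k ≃ₐ[k] MvPolynomial (Fin n) k :=
  AlgEquiv.ofAlgHom (linearSubst A) (linearSubst A⁻¹)
    (by rw [linearSubst_comp, Matrix.nonsing_inv_mul A hA, linearSubst_one])
    (by rw [linearSubst_comp, Matrix.mul_nonsing_inv A hA, linearSubst_one])

theorem linearSubstEquiv_X (A : Matrix (Fin n) (Fin n) k) (hA : IsUnit A.det) (i : Fin n) :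
    linearSubstEquiv A hA (X i) = lin (A i) :=
  linearSubst_X A i

end LinearSubstitution

theorem Matrix.exists_isUnit_det_row_eq {R ι κ σ : Type*} [CommRing R] [Fintype ι] [Fintype κ]
    [DecidableEq ι] [DecidableEq κ] [Fintype σ] [DecidableEq σ] (e : ι ⊕ κ ≃ σ) (U : ι → σ → R)
    (hU : IsUnit (Matrix.of fun p q => U p (e (.inl q))).det) :
    ∃ A : Matrix σ σ R, IsUnit A.det ∧ ∀ p, A (e (.inl p)) = U p := by
  refine ⟨reindex e e (fromBlocks (of fun p q => U p (e (.inl q))) (of fun p q => U p (e (.inr q)))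
    0 1), ?_, fun p => funext fun x => ?_⟩
  · rwa [det_reindex_self, det_fromBlocks_zero₂₁, det_one, mul_one]
  · obtain ⟨y, rfl⟩ := e.surjective x
    cases y <;> simp

theorem span_lin_pair_isPrime_and_notMem {k : Type*} [CommRing k] [IsDomain k] {n : ℕ}
    (hn : 3 ≤ n) (u : Fin 3 → Fin n → k)
    (hu : IsUnit (Matrix.of fun p q : Fin 3 => u p (Fin.castLE hn q)).det) :
    (Ideal.span {lin (u 0), lin (u 1)}).IsPrime ∧
      lin (u 2) ∉ Ideal.span {lin (u 0), lin (u 1)} := by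
  set e : Fin 3 ⊕ Fin (n - 3) ≃ Fin n := finSumFinEquiv.trans (finCongr (Nat.add_sub_cancel' hn))
  have he (q : Fin 3) : e (.inl q) = Fin.castLE hn q := Fin.ext (by simp [e])
  obtain ⟨A, hA, hrow⟩ := Matrix.exists_isUnit_det_row_eq e u (by simpa only [he] using hu)
  set Φ := (linearSubstEquiv A hA).toRingEquiv
  have hΦ (p : Fin 3) : Φ (X (e (.inl p))) = lin (u p) := by
    simp [Φ, linearSubstEquiv_X, hrow]
  set I : Ideal (MvPolynomial (Fin n) k) := Ideal.span (X '' {e (.inl 0), e (.inl 1)})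
  have hI : Ideal.span {lin (u 0), lin (u 1)} = I.map Φ := by
    simp only [I, Ideal.map_span, Set.image_pair, hΦ]
  have := isPrime_span_X_image (R := k) {e (.inl 0), e (.inl 1)}
  refine ⟨hI ▸ Ideal.map_isPrime_of_equiv Φ, ?_⟩
  rw [hI, ← hΦ 2, Ideal.apply_mem_of_equiv_iff]
  exact X_notMem_span_X_image (by simp [e.injective.eq_iff])

section PairIntersections

open Ideal

variable {R ι : Type*} [CommRing R] [DecidableEq ι]

theorem mem_span_pair_prod_of_forall_mem_span_pair {M f : R} {L : ι → R} {s : Finset ι}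
    (hL : ∀ i ∈ s, ∀ j ∈ s, i ≠ j → (span {M, L i}).IsPrime ∧ L j ∉ span {M, L i})
    (hf : ∀ i ∈ s, f ∈ span {M, L i}) : f ∈ span {M, ∏ i ∈ s, L i} := by
  induction s using Finset.induction with
  | empty => simp [span_insert, span_singleton_one]
  | insert b t hb ih =>
    have ih := ih (fun i hi j hj hij => hL i (mem_insert_of_mem hi) j (mem_insert_of_mem hj) hij)
      (fun i hi => hf i (mem_insert_of_mem hi))
    obtain rfl | ⟨j, hj⟩ := t.eq_empty_or_nonempty
    · simpa using hf b (mem_insert_self b ∅)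
    have hne : b ≠ j := fun h => hb (h ▸ hj)
    have hprime := (hL b (mem_insert_self b t) j (mem_insert_of_mem hj) hne).1
    have hP : ∏ i ∈ t, L i ∉ span {M, L b} := by
      rw [hprime.prod_mem_iff]
      rintro ⟨i, hi, hLi⟩
      exact (hL b (mem_insert_self b t) i (mem_insert_of_mem hi) fun h => hb (h ▸ hi)).2 hLi
    obtain ⟨x, y, hxy⟩ := mem_span_pair.mp ih
    have hy : y ∈ span {M, L b} := by
      refine (hprime.mem_or_mem ?_).resolve_right hP
      rw [show y * ∏ i ∈ t, L i = f - x * M by rw [← hxy]; ring]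
      exact sub_mem (hf b (mem_insert_self b t)) (mul_mem_left _ x (subset_span (by simp)))
    obtain ⟨x', y', hxy'⟩ := mem_span_pair.mp hy
    exact mem_span_pair.mpr ⟨x + x' * ∏ i ∈ t, L i, y', by
      rw [prod_insert hb, ← hxy, ← hxy']; ring⟩

theorem prod_erase_mem_span_pair (L : ι → R) {s : Finset ι} (a : ι) {i j : ι} (hi : i ∈ s)
    (hj : j ∈ s) (hij : i ≠ j) : ∏ l ∈ s.erase a, L l ∈ span {L i, L j} := by
  obtain hl | hl : i ≠ a ∨ j ≠ a := by by_contra! h; exact hij (h.1.trans h.2.symm)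
  · exact span_mono (by simp) (mem_span_singleton.mpr (dvd_prod_of_mem L (mem_erase.mpr ⟨hl, hi⟩)))
  · exact span_mono (by simp) (mem_span_singleton.mpr (dvd_prod_of_mem L (mem_erase.mpr ⟨hl, hj⟩)))

theorem mem_span_prod_erase_of_forall_mem_span_pair (L : ι → R) {s : Finset ι} (hs : s.Nonempty)
    (hL : ∀ i ∈ s, ∀ j ∈ s, ∀ l ∈ s, i ≠ j → i ≠ l → j ≠ l →
      (span {L i, L j}).IsPrime ∧ L l ∉ span {L i, L j})
    {f : R} (hf : ∀ i ∈ s, ∀ j ∈ s, i ≠ j → f ∈ span {L i, L j}) :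
    f ∈ span ((fun i => ∏ j ∈ s.erase i, L j) '' s) := by
  induction hs using Finset.Nonempty.cons_induction generalizing f with
  | singleton a => simp
  | cons a t ha ht ih =>
    have hsub : t ⊆ t.cons a ha := subset_cons ha
    have hne {i : ι} (hi : i ∈ t) : a ≠ i := fun h => ha (h ▸ hi)
    have hmod : f ∈ span {L a, ∏ i ∈ t, L i} :=
      mem_span_pair_prod_of_forall_mem_span_pair
        (fun i hi j hj => hL a (mem_cons_self a t) i (hsub hi) j (hsub hj) (hne hi) (hne hj))
        (fun i hi => hf a (mem_cons_self a t) i (hsub hi) (hne hi))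
    obtain ⟨g, q, hgq⟩ := mem_span_pair.mp hmod
    have hg : g ∈ span ((fun i => ∏ j ∈ t.erase i, L j) '' t) := by
      refine ih (fun i hi j hj l hl => hL i (hsub hi) j (hsub hj) l (hsub hl))
        fun i hi j hj hij => ?_
      obtain ⟨hprime, hLa⟩ := hL i (hsub hi) j (hsub hj) a (mem_cons_self a t) hij
        (hne hi).symm (hne hj).symm
      refine (hprime.mem_or_mem ?_).resolve_right hLa
      rw [show g * L a = f - q * ∏ i ∈ t, L i by rw [← hgq]; ring, ← erase_cons ha]
      exact sub_mem (hf i (hsub hi) j (hsub hj) hij)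
        (mul_mem_left _ q (prod_erase_mem_span_pair L a (hsub hi) (hsub hj) hij))
    have hgLa : span ((fun i => ∏ j ∈ t.erase i, L j) '' t) * span {L a} ≤
        span ((fun i => ∏ j ∈ (t.cons a ha).erase i, L j) '' (t.cons a ha)) := by
      rw [span_mul_span', Set.mul_singleton, Set.image_image, span_le]
      rintro _ ⟨i, hi, rfl⟩
      refine subset_span ⟨i, hsub hi, ?_⟩
      simp only [erase_cons_of_ne ha (hne hi), prod_cons, mul_comm]
    rw [← hgq]
    refine add_mem (hgLa (mul_mem_mul hg (mem_span_singleton_self _))) (mul_mem_left _ q ?_)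
    exact subset_span ⟨a, mem_cons_self a t, by simp only [erase_cons]⟩

theorem iInf_span_pair_eq_span_prod_erase [Fintype ι] [LinearOrder ι] [Nonempty ι] (L : ι → R)
    (hL : ∀ i j l, i ≠ j → i ≠ l → j ≠ l → (span {L i, L j}).IsPrime ∧ L l ∉ span {L i, L j}) :
    ⨅ (i : ι) (j : ι) (_ : i < j), span {L i, L j} =
      span (Set.range fun i => ∏ j ∈ univ.erase i, L j) := by
  rw [← Set.image_univ, ← coe_univ]
  refine le_antisymm (fun f hf => ?_) (span_le.mpr ?_)
  · simp only [mem_iInf] at hf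
    refine mem_span_prod_erase_of_forall_mem_span_pair L univ_nonempty
      (fun i _ j _ l _ => hL i j l) fun i _ j _ hij => ?_
    rcases hij.lt_or_gt with h | h
    · exact hf i j h
    · exact Set.pair_comm (L i) (L j) ▸ hf j i h
  · rintro _ ⟨i, -, rfl⟩
    simp only [SetLike.mem_coe, mem_iInf]
    exact fun j l hjl => prod_erase_mem_span_pair L i (mem_univ j) (mem_univ l) hjl.ne

end PairIntersections

section GenericMinor

variable {R α β m : Type*} [CommRing R] [Fintype m] [DecidableEq m]

noncomputable def genericMinor (ρ : m ↪ α) (γ : m ↪ β) : MvPolynomial (α × β) R :=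
  rename (Prod.map ρ γ) (Matrix.mvPolynomialX m m R).det

theorem genericMinor_ne_zero [Nontrivial R] (ρ : m ↪ α) (γ : m ↪ β) :
    (genericMinor ρ γ : MvPolynomial (α × β) R) ≠ 0 :=
  (map_ne_zero_iff _ (rename_injective _ (ρ.injective.prodMap γ.injective))).mpr
    (Matrix.det_mvPolynomialX_ne_zero m R)

theorem eval_genericMinor (ρ : m ↪ α) (γ : m ↪ β) (c : α × β → R) :
    eval c (genericMinor ρ γ) = (Matrix.of fun p q => c (ρ p, γ q)).det := by
  rw [genericMinor, eval_rename, RingHom.map_det]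
  exact congrArg Matrix.det (Matrix.mvPolynomialX_mapMatrix_eval (.of fun p q => c (ρ p, γ q)))

end GenericMinor

theorem stmt3_general {k : Type*} [Field k] {n r : ℕ} (hn : 3 ≤ n) (hr : 2 ≤ r) :
    ∃ P : MvPolynomial (Fin r × Fin n) k, P ≠ 0 ∧
      ∀ c : Fin r × Fin n → k, eval c P ≠ 0 →
        (⨅ (i : Fin r) (j : Fin r) (_ : i < j),
            Ideal.span {lin (fun x => c (i, x)), lin (fun x => c (j, x))})
        = Ideal.span (Set.range fun i : Fin r =>
            ∏ j ∈ Finset.univ.erase i, lin (fun x => c (j, x))) := by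
  refine ⟨∏ ρ : Fin 3 ↪ Fin r, genericMinor ρ (Fin.castLEEmb hn),
    prod_ne_zero_iff.mpr fun ρ _ => genericMinor_ne_zero ρ _, fun c hc => ?_⟩
  have : Nonempty (Fin r) := ⟨⟨0, by omega⟩⟩
  refine iInf_span_pair_eq_span_prod_erase _ fun i j l hij hil hjl => ?_
  let ρ : Fin 3 ↪ Fin r := ⟨![i, j, l], by
    simp only [Matrix.vecCons, Fin.cons_injective_iff]
    simp [hij, hil, hjl, Function.Injective]⟩
  have hρ := (prod_ne_zero_iff.mp (by rwa [map_prod] at hc)) ρ (mem_univ ρ)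
  rw [eval_genericMinor] at hρ
  exact span_lin_pair_isPrime_and_notMem hn (fun p x => c (ρ p, x)) (isUnit_iff_ne_zero.mpr hρ)

/-- For a general choice of `r ≥ 2` linear forms `L 1, …, L r` in `n ≥ 3` variables
(over an algebraically closed field), the intersection `⋂_{i<j} (L i, L j)` equals the ideal
generated by the products of all but one of the `L i`.  "General" means: on the nonempty
Zariski-open subset of the parameter space `(R₁)^r` where some nonzero polynomial `P` in the
coefficients does not vanish. -/
theorem stmt3 {k : Type*} [Field k] [IsAlgClosed k] {n r : ℕ} (hn : 3 ≤ n) (hr : 2 ≤ r) :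
    ∃ P : MvPolynomial (Fin r × Fin n) k, P ≠ 0 ∧
      ∀ c : Fin r × Fin n → k, eval c P ≠ 0 →
        (⨅ (i : Fin r) (j : Fin r) (_ : i < j),
            Ideal.span {lin (fun x => c (i, x)), lin (fun x => c (j, x))})
        = Ideal.span (Set.range fun i : Fin r =>
            ∏ j ∈ Finset.univ.erase i, lin (fun x => c (j, x))) :=
  stmt3_general hn hr
end

section
/- Let k be a field, R = k[x_1,…,x_n], and let d_1,…,d_r be positive integers with d_1+⋯+d_r = d and d > 2r. Let L_1,…,L_r, N_1,…,N_r ∈ R_1 be linear forms such that no L_i is proportional to any N_j. Set F = L_1^{d_1}⋯L_r^{d_r}, G = N_1^{d_1}⋯N_r^{d_r}, I_{P_1} = (F/L_1,…,F/L_r) and I_{P_2} = (G/N_1,…,G/N_r). Then the degree-d graded component of I_{P_1} ∩ I_{P_2} is zero; indeed every f in this component is divisible by L_1^{d_1−1}⋯L_r^{d_r−1}·N_1^{d_1−1}⋯N_r^{d_r−1}, a form of degree 2(d−r) > d. -/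
open MvPolynomial Finset

/-!
Each generator `F / L i = L i ^ (d i - 1) * ∏_{j ≠ i} L j ^ d j` of `I_{P₁}` is a multiple of
`∏ L i ^ (d i - 1)`, and likewise for `I_{P₂}`. A common factor of two non-proportional linear
forms has degree 0 (it is a unit) or 1 (then both forms are scalar multiples of it), so the
two products are coprime and every element of the intersection is divisible by their product.
That product is a nonzero form of degree `2 ∑ (d i - 1) ≥ 2 (d - r)`, which exceeds `d`; hence
the only form of degree `d` it divides is `0`.
-/

section Generators

variable {ι M : Type*} [Fintype ι] [DecidableEq ι]

theorem prod_pow_pred_dvd_pow_pred_mul_prod_erase [CommMonoid M] (x : ι → M) (e : ι → ℕ)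
    (i : ι) : (∏ j, x j ^ (e j - 1)) ∣ x i ^ (e i - 1) * ∏ j ∈ univ.erase i, x j ^ e j := by
  rw [← mul_prod_erase univ (fun j => x j ^ (e j - 1)) (mem_univ i)]
  exact mul_dvd_mul_left _ <| prod_dvd_prod_of_dvd _ _ fun j _ => pow_dvd_pow _ (Nat.sub_le _ _)

theorem prod_pow_pred_dvd_of_mem_span [CommSemiring M] (x : ι → M) (e : ι → ℕ) {f : M}
    (hf : f ∈ Ideal.span (Set.range fun i => x i ^ (e i - 1) * ∏ j ∈ univ.erase i, x j ^ e j)) :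
    (∏ j, x j ^ (e j - 1)) ∣ f := by
  rw [← Ideal.mem_span_singleton]
  refine Ideal.span_le.mpr ?_ hf
  rintro _ ⟨i, rfl⟩
  exact Ideal.mem_span_singleton.mpr (prod_pow_pred_dvd_pow_pred_mul_prod_erase x e i)

end Generators

namespace MvPolynomial

variable {σ : Type*}

theorem isRelPrime_of_linearIndependent {K : Type*} [Field K] {L N : MvPolynomial σ K}
    (hL : L.totalDegree ≤ 1) (hN : N.totalDegree ≤ 1) (hind : LinearIndependent K ![L, N]) :
    IsRelPrime L N := by
  have hL0 : L ≠ 0 := by simpa using hind.ne_zero 0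
  have hN0 : N ≠ 0 := by simpa using hind.ne_zero 1
  intro e ⟨a, hLa⟩ ⟨b, hNb⟩
  subst hLa hNb
  have he0 : e ≠ 0 := left_ne_zero_of_mul hL0
  have ha0 : a ≠ 0 := right_ne_zero_of_mul hL0
  have hb0 : b ≠ 0 := right_ne_zero_of_mul hN0
  rw [totalDegree_mul_of_isDomain he0 ha0] at hL
  rw [totalDegree_mul_of_isDomain he0 hb0] at hN
  obtain he | he : e.totalDegree = 0 ∨ e.totalDegree = 1 := by omega
  · refine isUnit_iff_totalDegree_of_isReduced.mpr ⟨isUnit_iff_ne_zero.mpr fun hc => he0 ?_, he⟩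
    rw [totalDegree_eq_zero_iff_eq_C.mp he, hc, C_0]
  · obtain ⟨a, rfl⟩ : ∃ c, a = C c := ⟨_, totalDegree_eq_zero_iff_eq_C.mp (by omega)⟩
    obtain ⟨b, rfl⟩ : ∃ c, b = C c := ⟨_, totalDegree_eq_zero_iff_eq_C.mp (by omega)⟩
    have hrel : b • (e * C a) + (-a) • (e * C b) = 0 := by
      simp only [smul_eq_C_mul, C_neg]
      ring
    exact absurd (LinearIndependent.pair_iff.mp hind _ _ hrel).2 (by simpa using ha0)

variable {R : Type*} [CommSemiring R]

theorem IsHomogeneous.prod_pow {ι : Type*} (s : Finset ι) {L : ι → MvPolynomial σ R}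
    (hL : ∀ i ∈ s, (L i).IsHomogeneous 1) (e : ι → ℕ) :
    (∏ i ∈ s, L i ^ e i).IsHomogeneous (∑ i ∈ s, e i) :=
  IsHomogeneous.prod s _ e fun i hi => by simpa using (hL i hi).pow (e i)

theorem IsHomogeneous.eq_zero_of_dvd_of_lt [NoZeroDivisors R] {p f : MvPolynomial σ R} {m d : ℕ}
    (hp : p.IsHomogeneous m) (hp0 : p ≠ 0) (hf : f.IsHomogeneous d) (hpf : p ∣ f)
    (hdm : d < m) : f = 0 := by
  by_contra hf0
  have := totalDegree_le_of_dvd_of_isDomain hpf hf0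
  rw [hp.totalDegree hp0, hf.totalDegree hf0] at this
  omega

end MvPolynomial

theorem stmt11_general {k : Type*} [Field k] {n r d : ℕ}
    (dd : Fin r → ℕ) (hsum : ∑ i, dd i = d) (hd2r : 2 * r < d)
    (L N : Fin r → MvPolynomial (Fin n) k)
    (hL : ∀ i, (L i).IsHomogeneous 1) (hN : ∀ i, (N i).IsHomogeneous 1)
    (hind : ∀ i j, LinearIndependent k ![L i, N j]) :
    (Submodule.restrictScalars k
        ((Ideal.span (Set.range fun i : Fin r =>
            L i ^ (dd i - 1) * ∏ j ∈ Finset.univ.erase i, L j ^ dd j)) ⊓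
         (Ideal.span (Set.range fun i : Fin r =>
            N i ^ (dd i - 1) * ∏ j ∈ Finset.univ.erase i, N j ^ dd j)))
      ⊓ homogeneousSubmodule (Fin n) k d) = ⊥ ∧
    (∀ f ∈ Submodule.restrictScalars k
        ((Ideal.span (Set.range fun i : Fin r =>
            L i ^ (dd i - 1) * ∏ j ∈ Finset.univ.erase i, L j ^ dd j)) ⊓
         (Ideal.span (Set.range fun i : Fin r =>
            N i ^ (dd i - 1) * ∏ j ∈ Finset.univ.erase i, N j ^ dd j)))
      ⊓ homogeneousSubmodule (Fin n) k d,
      ((∏ i, L i ^ (dd i - 1)) * ∏ i, N i ^ (dd i - 1)) ∣ f) ∧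
    d < 2 * (d - r) := by
  have hrel : IsRelPrime (∏ i, L i ^ (dd i - 1)) (∏ i, N i ^ (dd i - 1)) :=
    IsRelPrime.prod_left fun i _ => IsRelPrime.prod_right fun j _ => IsRelPrime.pow <|
      isRelPrime_of_linearIndependent (hL i).totalDegree_le (hN j).totalDegree_le (hind i j)
  refine (fun hdvd => ⟨(Submodule.eq_bot_iff _).mpr fun f hf => ?_, hdvd, by omega⟩)
    fun f hf => hrel.mul_dvd (prod_pow_pred_dvd_of_mem_span L dd hf.1.1)
      (prod_pow_pred_dvd_of_mem_span N dd hf.1.2)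
  have hPQ0 : (∏ i, L i ^ (dd i - 1)) * ∏ i, N i ^ (dd i - 1) ≠ 0 :=
    mul_ne_zero
      (prod_ne_zero_iff.mpr fun i _ => pow_ne_zero _ (by simpa using (hind i i).ne_zero 0))
      (prod_ne_zero_iff.mpr fun i _ => pow_ne_zero _ (by simpa using (hind i i).ne_zero 1))
  have hdeg : d < ∑ i, (dd i - 1) + ∑ i, (dd i - 1) := by
    have : ∑ i, dd i ≤ ∑ i, (dd i - 1 + 1) := sum_le_sum fun i _ => by omega
    simp only [sum_add_distrib, sum_const, card_univ, Fintype.card_fin, smul_eq_mul, mul_one] at this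
    omega
  exact ((IsHomogeneous.prod_pow _ (fun i _ => hL i) _).mul
    (IsHomogeneous.prod_pow _ (fun i _ => hN i) _)).eq_zero_of_dvd_of_lt hPQ0 hf.2 (hdvd f hf) hdeg

/-- Let `d₁ + ⋯ + d_r = d` with `d > 2r`, and let `L 1, …, L r, N 1, …, N r` be linear forms
with no `L i` proportional to any `N j`.  With `F = ∏ (L i)^{d i}`, `G = ∏ (N i)^{d i}`,
`I_{P₁} = (F/L 1, …, F/L r)` and `I_{P₂} = (G/N 1, …, G/N r)`, the degree-`d` component of
`I_{P₁} ∩ I_{P₂}` is zero; indeed every `f` in this component is divisible by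
`∏ (L i)^{d i - 1} · ∏ (N i)^{d i - 1}`, a form of degree `2(d-r) > d`. -/
theorem stmt11 {k : Type*} [Field k] {n r d : ℕ}
    (dd : Fin r → ℕ) (hdd : ∀ i, 0 < dd i) (hsum : ∑ i, dd i = d) (hd2r : 2 * r < d)
    (L N : Fin r → MvPolynomial (Fin n) k)
    (hL : ∀ i, (L i).IsHomogeneous 1) (hN : ∀ i, (N i).IsHomogeneous 1)
    (hind : ∀ i j, LinearIndependent k ![L i, N j]) :
    (Submodule.restrictScalars k
        ((Ideal.span (Set.range fun i : Fin r =>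
            L i ^ (dd i - 1) * ∏ j ∈ Finset.univ.erase i, L j ^ dd j)) ⊓
         (Ideal.span (Set.range fun i : Fin r =>
            N i ^ (dd i - 1) * ∏ j ∈ Finset.univ.erase i, N j ^ dd j)))
      ⊓ homogeneousSubmodule (Fin n) k d) = ⊥ ∧
    (∀ f ∈ Submodule.restrictScalars k
        ((Ideal.span (Set.range fun i : Fin r =>
            L i ^ (dd i - 1) * ∏ j ∈ Finset.univ.erase i, L j ^ dd j)) ⊓
         (Ideal.span (Set.range fun i : Fin r =>
            N i ^ (dd i - 1) * ∏ j ∈ Finset.univ.erase i, N j ^ dd j)))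
      ⊓ homogeneousSubmodule (Fin n) k d,
      ((∏ i, L i ^ (dd i - 1)) * ∏ i, N i ^ (dd i - 1)) ∣ f) ∧
    d < 2 * (d - r) :=
  stmt11_general dd hsum hd2r L N hL hN hind
end

section
/- Let k be an algebraically closed field of characteristic 0. Every cubic form f ∈ k[x,y,z] defining an irreducible plane cubic curve with a double point (a nodal or cuspidal cubic) can be written as f = L_1^2 L_2 + N_1^2 N_2 for suitable linear forms L_1, L_2, N_1, N_2 ∈ k[x,y,z]. In particular, after a linear change of variables every nodal cubic is xyz − x^3 − y^3, and the substitution x = −X−Y, y = X−Y, z = −Z yields the identity xyz − x^3 − y^3 = X^2(6Y+Z) + Y^2(2Y−Z). -/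
/-!
Move the singular point to `[0 : 0 : 1]` by a linear change of coordinates. Being singular
there, the form loses its monomials `z³, xz², yz²` and reads `z q(x, y) + c(x, y)`. Since
`2 ≠ 0`, the binary quadratic form diagonalises, `q = α L² + β N²`, with `L, N` a basis of the
binary linear forms. Written in that basis, every monomial of the binary cubic `c` is divisible
by `L²` or by `N²`, so `f = L² (α z + ⋯) + N² (β z + ⋯)`.
-/

open Matrix

namespace MvPolynomial

section LinearSubstitution

variable {R : Type*} [CommRing R] {n : Type*} [Fintype n]

noncomputable def linearForm (l : n → R) : MvPolynomial n R := ∑ i, C (l i) * X i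

theorem isHomogeneous_linearForm (l : n → R) : (linearForm l).IsHomogeneous 1 :=
  IsHomogeneous.sum _ _ _ fun i _ => isHomogeneous_C_mul_X (l i) i

@[simp]
theorem eval_linearForm (l v : n → R) : eval v (linearForm l) = l ⬝ᵥ v := by
  simp [linearForm, dotProduct]

@[simp]
theorem pderiv_linearForm (l : n → R) (i : n) : pderiv i (linearForm l) = C (l i) := by
  classical
  simp [linearForm, pderiv_X, Pi.single_apply]

theorem linearForm_one_apply [DecidableEq n] (i : n) :
    linearForm ((1 : Matrix n n R) i) = X i := by
  simp [linearForm, Matrix.one_apply]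

noncomputable def linearSubst (M : Matrix n n R) : MvPolynomial n R →ₐ[R] MvPolynomial n R :=
  aeval fun i => linearForm (M i)

theorem linearSubst_X (M : Matrix n n R) (i : n) : linearSubst M (X i) = linearForm (M i) :=
  aeval_X _ _

theorem eval_linearSubst (M : Matrix n n R) (v : n → R) (p : MvPolynomial n R) :
    eval v (linearSubst M p) = eval (M *ᵥ v) p := by
  induction p using MvPolynomial.induction_on with
  | C a => simp [linearSubst]
  | add p q hp hq => simp [hp, hq]
  | mul_X p i hp => simp [hp, linearSubst_X, mulVec]

theorem linearSubst_linearForm (M : Matrix n n R) (l : n → R) :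
    linearSubst M (linearForm l) = linearForm (l ᵥ* M) := by
  simp only [linearForm, map_sum, map_mul, linearSubst_X, algHom_C, algebraMap_eq,
    Finset.mul_sum, vecMul, dotProduct, Finset.sum_mul, ← mul_assoc]
  exact Finset.sum_comm

theorem linearSubst_linearSubst (M N : Matrix n n R) (p : MvPolynomial n R) :
    linearSubst N (linearSubst M p) = linearSubst (M * N) p := by
  rw [← AlgHom.comp_apply]
  congr 1
  refine algHom_ext fun i => ?_
  simp [linearSubst_X, linearSubst_linearForm]
  rfl

theorem linearSubst_one [DecidableEq n] (p : MvPolynomial n R) : linearSubst 1 p = p := by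
  simp [linearSubst, linearForm_one_apply]

theorem IsHomogeneous.linearSubst {p : MvPolynomial n R} {d : ℕ} (hp : p.IsHomogeneous d)
    (M : Matrix n n R) : (linearSubst M p).IsHomogeneous d := by
  unfold MvPolynomial.linearSubst
  simpa only [one_mul] using hp.aeval _ fun i => isHomogeneous_linearForm (M i)

theorem pderiv_aeval {σ τ : Type*} [Fintype σ] (g : σ → MvPolynomial τ R) (i : τ)
    (p : MvPolynomial σ R) :
    pderiv i (aeval g p) = ∑ j, aeval g (pderiv j p) * pderiv i (g j) := by
  classical
  induction p using MvPolynomial.induction_on with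
  | C a => simp
  | add p q hp hq => simp only [map_add, hp, hq, add_mul, Finset.sum_add_distrib]
  | mul_X p j hp =>
    simp [-aeval_eq_bind₁, hp, pderiv_X, Pi.single_apply, add_mul, Finset.sum_add_distrib,
      apply_ite, Finset.mul_sum, mul_assoc]

theorem pderiv_linearSubst (M : Matrix n n R) (i : n) (p : MvPolynomial n R) :
    pderiv i (linearSubst M p) = ∑ j, linearSubst M (pderiv j p) * C (M j i) := by
  simp [linearSubst, pderiv_aeval, -aeval_eq_bind₁]

def IsSingularPoint (f : MvPolynomial n R) (a : n → R) : Prop :=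
  eval a f = 0 ∧ ∀ i, eval a (pderiv i f) = 0

theorem IsSingularPoint.linearSubst {f : MvPolynomial n R} {M : Matrix n n R} {v : n → R}
    (hf : IsSingularPoint f (M *ᵥ v)) : IsSingularPoint (linearSubst M f) v :=
  ⟨by rw [eval_linearSubst, hf.1], fun i => by simp [pderiv_linearSubst, eval_linearSubst, hf.2]⟩

def IsSqMulAddSqMul (f : MvPolynomial n R) : Prop :=
  ∃ L₁ L₂ N₁ N₂ : MvPolynomial n R,
    L₁.IsHomogeneous 1 ∧ L₂.IsHomogeneous 1 ∧ N₁.IsHomogeneous 1 ∧ N₂.IsHomogeneous 1 ∧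
      f = L₁ ^ 2 * L₂ + N₁ ^ 2 * N₂

theorem IsSqMulAddSqMul.linearSubst {f : MvPolynomial n R} (hf : IsSqMulAddSqMul f)
    (M : Matrix n n R) : IsSqMulAddSqMul (linearSubst M f) := by
  obtain ⟨L₁, L₂, N₁, N₂, h₁, h₂, h₃, h₄, rfl⟩ := hf
  exact ⟨_, _, _, _, h₁.linearSubst M, h₂.linearSubst M, h₃.linearSubst M, h₄.linearSubst M,
    by simp⟩

theorem isSqMulAddSqMul_of_linearSubst [DecidableEq n] {f : MvPolynomial n R}
    {M N : Matrix n n R} (hMN : M * N = 1) (hf : IsSqMulAddSqMul (linearSubst M f)) :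
    IsSqMulAddSqMul f := by
  simpa [linearSubst_linearSubst, hMN, linearSubst_one] using hf.linearSubst N

end LinearSubstitution

theorem exists_mul_eq_one_mulVec_single_eq {k ι : Type*} [Field k] [Fintype ι] [DecidableEq ι]
    (i : ι) {a : ι → k} (ha : a ≠ 0) :
    ∃ M N : Matrix ι ι k, M * N = 1 ∧ M *ᵥ Pi.single i 1 = a := by
  have : MulAction.IsPretransitive (SpecialLinearGroup ι k) (Projectivization k (ι → k)) :=
    MulAction.isPretransitive_of_is_two_pretransitive
  obtain ⟨g, hg⟩ := MulAction.exists_smul_eq (SpecialLinearGroup ι k)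
    (Projectivization.mk k (Pi.single i (1 : k)) (by simp)) (Projectivization.mk k a ha)
  rw [Projectivization.matrixSpecialLinearGroup_smul_def, Projectivization.smul_mk,
    Projectivization.mk_eq_mk_iff] at hg
  obtain ⟨c, hc⟩ := hg
  have hc' : (c : k) • a = (g : Matrix ι ι k) *ᵥ Pi.single i 1 := hc
  refine ⟨(c⁻¹ : k) • (g : Matrix ι ι k), (c : k) • (g⁻¹ : SpecialLinearGroup ι k), ?_, ?_⟩
  · simp [smul_smul, Matrix.mul_adjugate]
  · rw [Matrix.smul_mulVec, ← hc', smul_smul]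
    simp

section Cubics

variable {R : Type*} [CommRing R]

theorem IsHomogeneous.eq_sum_antidiagonalTuple {m d : ℕ} {g : MvPolynomial (Fin m) R}
    (hg : g.IsHomogeneous d) :
    g = ∑ v ∈ Finset.Nat.antidiagonalTuple m d,
      monomial (Finsupp.equivFunOnFinite.symm v) (coeff (Finsupp.equivFunOnFinite.symm v) g) := by
  calc g = ∑ w ∈ g.support, monomial w (coeff w g) := g.as_sum
    _ = ∑ w ∈ (Finset.Nat.antidiagonalTuple m d).map Finsupp.equivFunOnFinite.symm.toEmbedding,
          monomial w (coeff w g) := by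
      refine Finset.sum_subset (fun w hw => ?_) fun w _ hw => by
        rw [notMem_support_iff.mp hw, map_zero]
      have hdeg := hg.degree_eq_sum_deg_support hw
      rw [← Finsupp.degree_apply, Finsupp.degree_eq_sum] at hdeg
      simpa [Finset.Nat.mem_antidiagonalTuple] using hdeg.symm
    _ = _ := Finset.sum_map _ _ _

theorem exists_eq_of_isSingularPoint_single_two {g : MvPolynomial (Fin 3) R}
    (hg : g.IsHomogeneous 3) (hsing : IsSingularPoint g (Pi.single 2 1)) :
    ∃ q₀ q₁ q₂ c₀ c₁ c₂ c₃ : R,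
      g = X 2 * (C q₀ * X 0 ^ 2 + C q₁ * X 0 * X 1 + C q₂ * X 1 ^ 2) +
        (C c₀ * X 0 ^ 3 + C c₁ * X 0 ^ 2 * X 1 + C c₂ * X 0 * X 1 ^ 2 + C c₃ * X 1 ^ 3) := by
  have hexp := hg.eq_sum_antidiagonalTuple
  rw [show Finset.Nat.antidiagonalTuple 3 3 = {![3, 0, 0], ![2, 1, 0], ![2, 0, 1], ![1, 2, 0],
    ![1, 1, 1], ![1, 0, 2], ![0, 3, 0], ![0, 2, 1], ![0, 1, 2], ![0, 0, 3]} by decide] at hexp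
  simp [Finset.sum_insert, monomial_eq, Finsupp.prod_fintype, Fin.prod_univ_three] at hexp
  obtain ⟨hz₃, hd⟩ := hsing
  have hxz₂ := hd 0
  have hyz₂ := hd 1
  rw [hexp] at hz₃ hxz₂ hyz₂
  simp at hz₃ hxz₂ hyz₂
  set c : (Fin 3 → ℕ) → R := fun v => coeff (Finsupp.equivFunOnFinite.symm v) g
  refine ⟨c ![2, 0, 1], c ![1, 1, 1], c ![0, 2, 1], c ![3, 0, 0], c ![2, 1, 0], c ![1, 2, 0],
    c ![0, 3, 0], ?_⟩
  rw [hexp, hz₃, hxz₂, hyz₂]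
  simp only [map_zero, zero_mul, add_zero]
  ring

theorem isSqMulAddSqMul_X_two_mul_add_of_diagonal {L N : MvPolynomial (Fin 3) R}
    (hL : L.IsHomogeneous 1) (hN : N.IsHomogeneous 1) {p q r s α β q₀ q₁ q₂ : R}
    (hx : X 0 = C p * L + C q * N) (hy : X 1 = C r * L + C s * N)
    (hq : C q₀ * X 0 ^ 2 + C q₁ * X 0 * X 1 + C q₂ * X 1 ^ 2 = C α * L ^ 2 + C β * N ^ 2)
    (c₀ c₁ c₂ c₃ : R) :
    IsSqMulAddSqMul ((X 2 : MvPolynomial (Fin 3) R) *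
        (C q₀ * X 0 ^ 2 + C q₁ * X 0 * X 1 + C q₂ * X 1 ^ 2) +
      (C c₀ * X 0 ^ 3 + C c₁ * X 0 ^ 2 * X 1 + C c₂ * X 0 * X 1 ^ 2 + C c₃ * X 1 ^ 3)) := by
  have hlin : ∀ a b c : R, (C a * X 2 + C b * L + C c * N).IsHomogeneous 1 := fun a b c =>
    ((isHomogeneous_C_mul_X a 2).add (hL.C_mul b)).add (hN.C_mul c)
  -- the coefficients of `c₀ x³ + c₁ x²y + c₂ xy² + c₃ y³` in the basis `L³, L²N, LN², N³`
  refine ⟨L, C α * X 2 + C (c₀ * p ^ 3 + c₁ * p ^ 2 * r + c₂ * p * r ^ 2 + c₃ * r ^ 3) * L +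
      C (3 * c₀ * p ^ 2 * q + c₁ * (p ^ 2 * s + 2 * p * q * r) + c₂ * (2 * p * r * s + q * r ^ 2) +
        3 * c₃ * r ^ 2 * s) * N,
    N, C β * X 2 + C (3 * c₀ * p * q ^ 2 + c₁ * (q ^ 2 * r + 2 * p * q * s) +
        c₂ * (p * s ^ 2 + 2 * q * r * s) + 3 * c₃ * r * s ^ 2) * L +
      C (c₀ * q ^ 3 + c₁ * q ^ 2 * s + c₂ * q * s ^ 2 + c₃ * s ^ 3) * N,
    hL, hlin _ _ _, hN, hlin _ _ _, ?_⟩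
  rw [hq, hx, hy]
  simp only [map_add, map_mul, map_pow, map_ofNat]
  ring

end Cubics

theorem isSqMulAddSqMul_X_two_mul_add {k : Type*} [Field k] (h2 : (2 : k) ≠ 0)
    (q₀ q₁ q₂ c₀ c₁ c₂ c₃ : k) :
    IsSqMulAddSqMul ((X 2 : MvPolynomial (Fin 3) k) *
        (C q₀ * X 0 ^ 2 + C q₁ * X 0 * X 1 + C q₂ * X 1 ^ 2) +
      (C c₀ * X 0 ^ 3 + C c₁ * X 0 ^ 2 * X 1 + C c₂ * X 0 * X 1 ^ 2 + C c₃ * X 1 ^ 3)) := by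
  by_cases h₀ : q₀ = 0
  · by_cases h₂ : q₂ = 0
    · subst h₀ h₂
      have hhalf : C (1 / 2 : k) * 2 = (1 : MvPolynomial (Fin 3) k) := by
        rw [← map_ofNat C 2, ← map_mul, one_div_mul_cancel h2, map_one]
      -- `x y = ((x + y) / 2)² - ((x - y) / 2)²`
      refine isSqMulAddSqMul_X_two_mul_add_of_diagonal (p := 1) (q := 1) (r := 1) (s := -1)
        (α := q₁) (β := -q₁)
        ((isHomogeneous_X k 0).add (isHomogeneous_X k 1) |>.C_mul (1 / 2))
        ((isHomogeneous_X k 0).sub (isHomogeneous_X k 1) |>.C_mul (1 / 2))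
        (by simp only [map_one]; linear_combination (-X 0) * hhalf)
        (by simp only [map_one, map_neg]; linear_combination (-X 1) * hhalf)
        (by
          simp only [map_zero, map_neg]
          linear_combination (-C q₁ * X 0 * X 1 * (C (1 / 2 : k) * 2 + 1)) * hhalf) _ _ _ _
    · obtain ⟨t, ht⟩ : ∃ t, q₁ = 2 * q₂ * t := ⟨q₁ / (2 * q₂), by field_simp⟩
      -- `q₁ x y + q₂ y² = q₂ (y + t x)² - q₂ t² x²`
      refine isSqMulAddSqMul_X_two_mul_add_of_diagonal (p := 1) (q := 0) (r := -t) (s := 1)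
        (α := -(q₂ * t ^ 2)) (β := q₂)
        (isHomogeneous_X k 0) ((isHomogeneous_X k 1).add (isHomogeneous_C_mul_X t 0))
        (by simp) (by simp only [map_one, map_neg]; ring)
        (by rw [h₀, ht]; simp only [map_zero, map_mul, map_neg, map_pow, map_ofNat]; ring) _ _ _ _
  · obtain ⟨t, ht⟩ : ∃ t, q₁ = 2 * q₀ * t := ⟨q₁ / (2 * q₀), by field_simp⟩
    -- `q₀ x² + q₁ x y + q₂ y² = q₀ (x + t y)² + (q₂ - q₀ t²) y²`
    refine isSqMulAddSqMul_X_two_mul_add_of_diagonal (p := 1) (q := -t) (r := 0) (s := 1)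
      (α := q₀) (β := q₂ - q₀ * t ^ 2)
      ((isHomogeneous_X k 0).add (isHomogeneous_C_mul_X t 1)) (isHomogeneous_X k 1)
      (by simp only [map_one, map_neg]; ring) (by simp)
      (by rw [ht]; simp only [map_sub, map_mul, map_pow, map_ofNat]; ring) _ _ _ _

end MvPolynomial

open MvPolynomial

theorem stmt18_general {k : Type*} [Field k] [CharZero k]
    (f : MvPolynomial (Fin 3) k) (hf : f.IsHomogeneous 3)
    (hsing : ∃ a : Fin 3 → k, a ≠ 0 ∧ eval a f = 0 ∧ ∀ i, eval a (pderiv i f) = 0) :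
    (∃ L₁ L₂ N₁ N₂ : MvPolynomial (Fin 3) k,
      L₁.IsHomogeneous 1 ∧ L₂.IsHomogeneous 1 ∧ N₁.IsHomogeneous 1 ∧ N₂.IsHomogeneous 1 ∧
      f = L₁ ^ 2 * L₂ + N₁ ^ 2 * N₂) ∧
    ((-X 0 - X 1) * (X 0 - X 1) * (-X 2) - (-X 0 - X 1) ^ 3 - (X 0 - X 1) ^ 3
        : MvPolynomial (Fin 3) k)
      = X 0 ^ 2 * (6 * X 1 + X 2) + X 1 ^ 2 * (2 * X 1 - X 2) := by
  refine ⟨?_, by ring⟩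
  obtain ⟨a, ha, hfa⟩ := hsing
  obtain ⟨M, N, hMN, rfl⟩ := exists_mul_eq_one_mulVec_single_eq 2 ha
  obtain ⟨q₀, q₁, q₂, c₀, c₁, c₂, c₃, hnf⟩ :=
    exists_eq_of_isSingularPoint_single_two (hf.linearSubst M) (IsSingularPoint.linearSubst hfa)
  refine isSqMulAddSqMul_of_linearSubst hMN ?_
  rw [hnf]
  exact isSqMulAddSqMul_X_two_mul_add two_ne_zero _ _ _ _ _ _ _

/-- Over an algebraically closed field of characteristic `0`, every cubic form
`f ∈ k[x,y,z]` defining an irreducible plane cubic curve with a double point (i.e. `f` is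
irreducible and the curve has a singular point — a nodal or cuspidal cubic) can be written
as `f = L₁²L₂ + N₁²N₂` for suitable linear forms `L₁, L₂, N₁, N₂`.  Moreover the
substitution `x = -X-Y`, `y = X-Y`, `z = -Z` applied to the nodal normal form
`xyz - x³ - y³` yields the identity `xyz - x³ - y³ = X²(6Y+Z) + Y²(2Y-Z)`. -/
theorem stmt18 {k : Type*} [Field k] [IsAlgClosed k] [CharZero k]
    (f : MvPolynomial (Fin 3) k) (hf : f.IsHomogeneous 3) (hirr : Irreducible f)
    (hsing : ∃ a : Fin 3 → k, a ≠ 0 ∧ eval a f = 0 ∧ ∀ i, eval a (pderiv i f) = 0) :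
    (∃ L₁ L₂ N₁ N₂ : MvPolynomial (Fin 3) k,
      L₁.IsHomogeneous 1 ∧ L₂.IsHomogeneous 1 ∧ N₁.IsHomogeneous 1 ∧ N₂.IsHomogeneous 1 ∧
      f = L₁ ^ 2 * L₂ + N₁ ^ 2 * N₂) ∧
    ((-X 0 - X 1) * (X 0 - X 1) * (-X 2) - (-X 0 - X 1) ^ 3 - (X 0 - X 1) ^ 3
        : MvPolynomial (Fin 3) k)
      = X 0 ^ 2 * (6 * X 1 + X 2) + X 1 ^ 2 * (2 * X 1 - X 2) :=
  stmt18_general f hf hsing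
end

section
/- Let k be a field of characteristic different from 2 and R = k[x,y,z]. Then the monomial xyz has Z_1^2Z_2-rank equal to 2: on the one hand 4xyz = x(y+z)^2 − x(y−z)^2, so xyz is a sum of two terms of the form L^2N with L, N linear forms; on the other hand there exist no linear forms L, N ∈ R_1 with xyz = L^2N, so the rank is not 1. -/
open MvPolynomial Finset

/-!
The identity `4xyz = x(y+z)² - x(y-z)²` gives two summands once `4` is inverted. A single
summand `L²N` is impossible: `L` is a non-unit whose square divides `xyz`, which is squarefree
as a product of pairwise non-associated prime variables.
-/

namespace MvPolynomial

theorem squarefree_prod_X {σ R : Type*} [CommRing R] [IsDomain R] [UniqueFactorizationMonoid R]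
    (s : Finset σ) : Squarefree (∏ i ∈ s, (X i : MvPolynomial σ R)) :=
  Finset.squarefree_prod_of_pairwise_isCoprime
    (fun _ _ _ _ hij ↦ X_prime.irreducible.isRelPrime_iff_not_dvd.mpr (X_dvd_X.not.mpr hij))
    (fun _ _ ↦ X_prime.squarefree)

theorem IsHomogeneous.not_isUnit {σ R : Type*} [CommSemiring R] [Nontrivial R]
    {φ : MvPolynomial σ R} {n : ℕ} (hφ : φ.IsHomogeneous n) (hn : n ≠ 0) : ¬IsUnit φ := by
  intro hu
  have hconst := hu.map constantCoeff
  rw [constantCoeff_eq, hφ.coeff_eq_zero (by simpa using hn.symm)] at hconst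
  exact not_isUnit_zero hconst

end MvPolynomial

/-- Over a field of characteristic `≠ 2`, the monomial `xyz ∈ k[x,y,z]` has
`Z₁²Z₂`-rank equal to `2`: one has `4xyz = x(y+z)² - x(y-z)²`, so `xyz` is a sum of two
expressions of the form `L²N` with `L, N` linear forms, while `xyz` cannot be written as a
single such expression `L²N`. -/
theorem stmt19 {k : Type*} [Field k] (h2 : (2 : k) ≠ 0) :
    ((4 : MvPolynomial (Fin 3) k) * (X 0 * X 1 * X 2)
        = X 0 * (X 1 + X 2) ^ 2 - X 0 * (X 1 - X 2) ^ 2) ∧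
    (∃ L₁ N₁ L₂ N₂ : MvPolynomial (Fin 3) k,
      L₁.IsHomogeneous 1 ∧ N₁.IsHomogeneous 1 ∧ L₂.IsHomogeneous 1 ∧ N₂.IsHomogeneous 1 ∧
      (X 0 * X 1 * X 2 : MvPolynomial (Fin 3) k) = L₁ ^ 2 * N₁ + L₂ ^ 2 * N₂) ∧
    ¬∃ L N : MvPolynomial (Fin 3) k, L.IsHomogeneous 1 ∧ N.IsHomogeneous 1 ∧
      (X 0 * X 1 * X 2 : MvPolynomial (Fin 3) k) = L ^ 2 * N := by
  have hfour : (4 : MvPolynomial (Fin 3) k) * (X 0 * X 1 * X 2)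
      = X 0 * (X 1 + X 2) ^ 2 - X 0 * (X 1 - X 2) ^ 2 := by ring
  have hhalf : C (2⁻¹ : k) * 2 = (1 : MvPolynomial (Fin 3) k) := by
    rw [← map_ofNat C 2, ← C_mul, inv_mul_cancel₀ h2, C_1]
  refine ⟨hfour, ⟨C 2⁻¹ * (X 1 + X 2), X 0, C 2⁻¹ * (X 1 - X 2), -X 0,
    ((isHomogeneous_X k 1).add (isHomogeneous_X k 2)).C_mul _, isHomogeneous_X k 0,
    ((isHomogeneous_X k 1).sub (isHomogeneous_X k 2)).C_mul _, (isHomogeneous_X k 0).neg,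
    by linear_combination (-(C 2⁻¹ * 2 + 1) * (X 0 * X 1 * X 2)) * hhalf⟩, ?_⟩
  rintro ⟨L, N, hL, -, hLN⟩
  have hsqf : Squarefree (X 0 * X 1 * X 2 : MvPolynomial (Fin 3) k) := by
    simpa [Fin.prod_univ_three] using squarefree_prod_X (R := k) (univ : Finset (Fin 3))
  exact hL.not_isUnit one_ne_zero (hsqf L ⟨N, by rw [hLN]; ring⟩)
end
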